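/- arXiv:1605.04337 — 8 statements merged into one kernel-verified Lean document; each statement's English description precedes it below -/
import Mathlib

section
/- In dimension d = 2, the minimum of two affine (hence convex) functions can fail to be convex: there exist w₁, w₂ ∈ ℝ² and affine functions h₁, h₂ : ℝ² → ℝ such that min{h₁, h₂}(½w₁ + ½w₂) > ½ min{h₁,h₂}(w₁) + ½ min{h₁,h₂}(w₂). Consequently, for FPR ranges [α,β] with ⌊nα⌋ > 0 there exists a training sample on which the hinge-loss partial AUC surrogate R̂^hinge_{pAUC(α,β)}(w;S) = (1/(m(j_β−j_α))) Σ_i Σ_{j=j_α+1}^{j_β} (1 − wᵀ(x⁺_i − x⁻_{(j)_w}))₊ is non-convex in w, where x⁻_{(j)_w} is the j-th highest-scored negative under w. -/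
/-- Dot product of vectors in ℝ^d. -/
noncomputable def dot {d : ℕ} (w x : Fin d → ℝ) : ℝ := ∑ l, w l * x l

/-- The j-th largest (1-indexed) of the n negative scores wᵀx⁻_l. -/
noncomputable def kthScore {n d : ℕ} (w : Fin d → ℝ) (xn : Fin n → Fin d → ℝ) (j : ℕ) : ℝ :=
  (((Finset.univ : Finset (Fin n)).val.map fun l => dot w (xn l)).sort (· ≤ ·)).getD (n - j) 0

/-- The hinge partial AUC surrogate
R̂^hinge_{pAUC}(w) = (1/(m(j_β−j_α))) Σ_i Σ_{j=j_α+1}^{j_β} (1 − (wᵀx⁺_i − wᵀx⁻_{(j)_w}))₊,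
where x⁻_{(j)_w} is the j-th highest-scored negative under w (only its score matters). -/
noncomputable def hingeSurr {m n d : ℕ} (xp : Fin m → Fin d → ℝ) (xn : Fin n → Fin d → ℝ)
    (ja jb : ℕ) (w : Fin d → ℝ) : ℝ :=
  (1 / ((m : ℝ) * ((jb : ℝ) - (ja : ℝ)))) *
    ∑ i, ∑ j ∈ Finset.Icc (ja + 1) jb, max (1 - (dot w (xp i) - kthScore w xn j)) 0

/-!
Both parts come down to the concavity of `w ↦ min (w 0) (w 1)` along the segment from
`(1, 0)` to `(0, 1)`. For the surrogate, take one positive instance at the origin and order the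
negatives so that, for `w` on that segment, `n - j_α - 1` of them score `-1`, `j_α - 1` score `1`,
and the remaining two, `(0, 1)` and `(1, 0)`, score `w 1` and `w 0`. Then the `(j_α + 1)`-th
highest score is `min (w 0) (w 1)`, all lower ones are `-1` and contribute zero hinge loss, so the
surrogate equals `(1 + min (w 0) (w 1)) / (j_β - j_α)` on the segment: `1 / (j_β - j_α)` at the
endpoints but `3 / 2 / (j_β - j_α)` at the midpoint.
-/

theorem Fin.univ_val_map_getD {α β : Type*} {n : ℕ} (L : List α) (hL : L.length = n) (x : α)
    (f : α → β) : (Finset.univ.val.map fun l : Fin n => f (L.getD l x)) = L.map f := by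
  subst hL
  simp [Fin.univ_val_map]

theorem List.pairwise_le_replicate_append {α : Type*} [Preorder α] {r c d t : α} (a b : ℕ)
    (hrc : r ≤ c) (hcd : c ≤ d) (hdt : d ≤ t) :
    (replicate a r ++ c :: d :: replicate b t).Pairwise (· ≤ ·) := by
  simp only [pairwise_append, pairwise_cons, pairwise_replicate, mem_cons, mem_replicate]
  refine ⟨?_, ?_, ?_⟩ <;> grind

theorem kthScore_eq_getD {n d : ℕ} {w : Fin d → ℝ} {xn : Fin n → Fin d → ℝ} {L : List ℝ}
    (hL : (Finset.univ.val.map fun l => dot w (xn l)) = L) (hsorted : L.Pairwise (· ≤ ·))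
    (j : ℕ) : kthScore w xn j = L.getD (n - j) 0 := by
  rw [kthScore, hL, Multiset.coe_sort, List.mergeSort_eq_self (r := (· ≤ ·)) hsorted]

theorem hingeSurr_origin_eq {n d : ℕ} {xn : Fin n → Fin d → ℝ} {ja jb : ℕ} {w : Fin d → ℝ}
    {c : ℝ} (hab : ja < jb) (hc : kthScore w xn (ja + 1) = c)
    (hlow : ∀ j ∈ Finset.Ioc (ja + 1) jb, kthScore w xn j = -1) :
    hingeSurr (fun _ : Fin 1 => 0) xn ja jb w = max (1 + c) 0 / (jb - ja) := by
  have hdot : dot w 0 = 0 := by simp [dot]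
  rw [hingeSurr, Fin.sum_univ_one, Finset.Icc_eq_cons_Ioc (by omega : ja + 1 ≤ jb),
    Finset.sum_cons, Finset.sum_eq_zero fun j hj => by simp [hlow j hj, hdot], hdot, hc,
    add_zero, Nat.cast_one, one_mul, zero_sub, sub_neg_eq_add, one_div_mul_eq_div]

def negSample (a b : ℕ) : List (Fin 2 → ℝ) :=
  List.replicate a ![-1, -1] ++ ![0, 1] :: ![1, 0] :: List.replicate b ![1, 1]

theorem length_negSample (a b : ℕ) : (negSample a b).length = a + 2 + b := by
  simp only [negSample, List.length_append, List.length_replicate, List.length_cons]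
  ring

theorem kthScore_negSample {a b n : ℕ} (hn : a + 2 + b = n) {w : Fin 2 → ℝ}
    (h0 : 0 ≤ w 0) (h1 : 0 ≤ w 1) (hw : w 0 + w 1 = 1) (j : ℕ) :
    kthScore w (fun l : Fin n => (negSample a b).getD l 0) j =
      (List.replicate a (-1) ++ min (w 0) (w 1) :: max (w 0) (w 1) :: List.replicate b 1).getD
        (n - j) 0 := by
  refine kthScore_eq_getD ?_ (List.pairwise_le_replicate_append a b (by grind) min_le_max
    (by grind)) j
  rw [Fin.univ_val_map_getD _ ((length_negSample a b).trans hn)]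
  have hscores : (negSample a b).map (dot w) =
      List.replicate a (-1) ++ w 1 :: w 0 :: List.replicate b 1 := by
    simp [negSample, dot, Fin.sum_univ_two, ← neg_add, hw]
  rw [hscores, Multiset.coe_eq_coe]
  refine List.Perm.append_left _ ?_
  rcases le_total (w 0) (w 1) with h | h
  · rw [min_eq_left h, max_eq_right h]
    exact List.Perm.swap _ _ _
  · rw [min_eq_right h, max_eq_left h]

theorem hingeSurr_negSample {n ja jb : ℕ} (hja : 0 < ja) (hab : ja < jb) (hbn : jb ≤ n)
    {w : Fin 2 → ℝ} (h0 : 0 ≤ w 0) (h1 : 0 ≤ w 1) (hw : w 0 + w 1 = 1) :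
    hingeSurr (fun _ : Fin 1 => 0) (fun l : Fin n => (negSample (n - ja - 1) (ja - 1)).getD l 0)
      ja jb w = (1 + min (w 0) (w 1)) / (jb - ja) := by
  have hn : n - ja - 1 + 2 + (ja - 1) = n := by omega
  rw [hingeSurr_origin_eq hab (c := min (w 0) (w 1)), max_eq_left (by positivity)]
  · rw [kthScore_negSample hn h0 h1 hw, show n - (ja + 1) = n - ja - 1 by omega]
    simp
  · intro j hj
    rw [Finset.mem_Ioc] at hj
    rw [kthScore_negSample hn h0 h1 hw, List.getD_append _ _ _ _ (by simp; omega)]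
    exact List.getD_replicate _ (by omega)

theorem not_convexOn_hingeSurr_negSample {n ja jb : ℕ} (hja : 0 < ja) (hab : ja < jb)
    (hbn : jb ≤ n) :
    ¬ ConvexOn ℝ Set.univ (hingeSurr (fun _ : Fin 1 => 0)
      (fun l : Fin n => (negSample (n - ja - 1) (ja - 1)).getD l 0) ja jb) := by
  intro hconv
  have hmid := hconv.2 (Set.mem_univ ![1, 0]) (Set.mem_univ ![0, 1])
    (by norm_num : (0 : ℝ) ≤ 1 / 2) (by norm_num : (0 : ℝ) ≤ 1 / 2) (by norm_num)
  rw [hingeSurr_negSample hja hab hbn (w := ![1, 0]) (by simp) (by simp) (by simp),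
    hingeSurr_negSample hja hab hbn (w := ![0, 1]) (by simp) (by simp) (by simp),
    hingeSurr_negSample hja hab hbn (by simp) (by simp) (by simp; norm_num)] at hmid
  have hgap : (0 : ℝ) < ((jb : ℝ) - ja)⁻¹ := inv_pos.2 (sub_pos.2 (Nat.cast_lt.2 hab))
  norm_num [div_eq_mul_inv] at hmid
  linarith

/-- Theorem 1 of the paper: (i) in ℝ² the minimum of two affine functions can fail
midpoint convexity; (ii) consequently, for any FPR range with j_α = ⌊nα⌋ > 0 there is
a training sample on which the hinge partial AUC surrogate is non-convex in w. -/
theorem stmt4 :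
    (∃ (w₁ w₂ : Fin 2 → ℝ) (h₁ h₂ : (Fin 2 → ℝ) → ℝ),
      (∃ a b, ∀ w, h₁ w = dot w a + b) ∧ (∃ a b, ∀ w, h₂ w = dot w a + b) ∧
      (1 / 2 : ℝ) * min (h₁ w₁) (h₂ w₁) + (1 / 2 : ℝ) * min (h₁ w₂) (h₂ w₂)
        < min (h₁ ((1 / 2 : ℝ) • w₁ + (1 / 2 : ℝ) • w₂))
            (h₂ ((1 / 2 : ℝ) • w₁ + (1 / 2 : ℝ) • w₂))) ∧
    (∀ n ja jb : ℕ, 0 < ja → ja < jb → jb ≤ n →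
      ∃ (m : ℕ) (xp : Fin m → Fin 2 → ℝ) (xn : Fin n → Fin 2 → ℝ),
        ¬ ConvexOn ℝ Set.univ (hingeSurr xp xn ja jb)) := by
  refine ⟨⟨![1, 0], ![0, 1], fun w => dot w ![1, 0], fun w => dot w ![0, 1],
    ⟨![1, 0], 0, fun w => (add_zero _).symm⟩, ⟨![0, 1], 0, fun w => (add_zero _).symm⟩, ?_⟩,
    fun n ja jb hja hab hbn => ⟨1, _, _, not_convexOn_hingeSurr_negSample hja hab hbn⟩⟩
  norm_num [dot, Fin.sum_univ_two]
end

section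
/- Let S₊ = (x⁺_1,…,x⁺_m) and S₋ = (x⁻_1,…,x⁻_n) be points in ℝ^d and w ∈ ℝ^d. Define Δ_AUC(π) = (1/(mn)) Σ_{i,j} π_{ij} and φ(S,π) = (1/(mn)) Σ_{i,j} (1−π_{ij})(x⁺_i − x⁻_j) over π ∈ {0,1}^{m×n}. Then max over π ∈ {0,1}^{m×n} of [Δ_AUC(π) − wᵀ(φ(S,π*) − φ(S,π))], where π* is the all-zeros matrix, equals (1/(mn)) Σ_{i=1}^m Σ_{j=1}^n (1 − wᵀ(x⁺_i − x⁻_j))₊. -/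
/-- AUC loss Δ_AUC(π) = (1/(mn)) Σ_{i,j} π_{ij}. -/
noncomputable def deltaAUC {m n : ℕ} (π : Fin m → Fin n → Bool) : ℝ :=
  (1 / ((m : ℝ) * n)) * ∑ i, ∑ j, (if π i j then (1 : ℝ) else 0)

/-- Joint feature map φ(S,π) = (1/(mn)) Σ_{i,j} (1−π_{ij})(x⁺_i − x⁻_j). -/
noncomputable def phiMap {d m n : ℕ} (xp : Fin m → Fin d → ℝ) (xn : Fin n → Fin d → ℝ)
    (π : Fin m → Fin n → Bool) : Fin d → ℝ :=
  (1 / ((m : ℝ) * n)) • ∑ i, ∑ j, (if π i j then (0 : ℝ) else 1) • (xp i - xn j)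

lemma dot_expand {d m n : ℕ} (xp : Fin m → Fin d → ℝ) (xn : Fin n → Fin d → ℝ)
    (w : Fin d → ℝ) (π : Fin m → Fin n → Bool) :
    dot w (phiMap xp xn π) =
      (1 / ((m : ℝ) * n)) * ∑ i, ∑ j,
        (if π i j then (0:ℝ) else 1) * dot w (xp i - xn j) := by
  simp only [dot, phiMap, Pi.smul_apply, Finset.sum_apply, Pi.sub_apply, smul_eq_mul,
    Finset.mul_sum]
  rw [Finset.sum_comm]
  refine Finset.sum_congr rfl fun i _ => ?_
  rw [Finset.sum_comm]
  refine Finset.sum_congr rfl fun j _ => ?_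
  exact Finset.sum_congr rfl fun l _ => by ring

lemma obj_eq {d m n : ℕ} (xp : Fin m → Fin d → ℝ) (xn : Fin n → Fin d → ℝ)
    (w : Fin d → ℝ) (π : Fin m → Fin n → Bool) :
    deltaAUC π - dot w (phiMap xp xn (fun _ _ => false) - phiMap xp xn π) =
      (1 / ((m : ℝ) * n)) * ∑ i, ∑ j,
        (if π i j then 1 - dot w (xp i - xn j) else 0) := by
  have h1 : dot w (phiMap xp xn (fun _ _ => false) - phiMap xp xn π) =
      dot w (phiMap xp xn (fun _ _ => false)) - dot w (phiMap xp xn π) := by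
    simp [dot, Pi.sub_apply, mul_sub, Finset.sum_sub_distrib]
  rw [h1, dot_expand, dot_expand, deltaAUC]
  have key : ((∑ i : Fin m, ∑ j : Fin n, if π i j then (1:ℝ) else 0)
      - ∑ i : Fin m, ∑ j : Fin n, (if (false:Bool) then (0:ℝ) else 1) * dot w (xp i - xn j))
      + ∑ i : Fin m, ∑ j : Fin n, (if π i j then (0:ℝ) else 1) * dot w (xp i - xn j)
      = ∑ i, ∑ j, (if π i j then 1 - dot w (xp i - xn j) else 0) := by
    rw [← Finset.sum_sub_distrib, ← Finset.sum_add_distrib]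
    refine Finset.sum_congr rfl fun i _ => ?_
    rw [← Finset.sum_sub_distrib, ← Finset.sum_add_distrib]
    refine Finset.sum_congr rfl fun j _ => ?_
    by_cases h : π i j <;> simp [h]
  linear_combination (1 / ((m:ℝ) * n)) * key

/-- Joachims (2006), relaxed form: the maximum over binary matrices π ∈ {0,1}^{m×n} of
Δ_AUC(π) − wᵀ(φ(S,π*) − φ(S,π)), with π* the all-zeros matrix, equals the pairwise
hinge surrogate (1/(mn)) Σ_{i,j} (1 − wᵀ(x⁺_i − x⁻_j))₊. -/
theorem stmt5 (d m n : ℕ) (hm : 0 < m) (hn : 0 < n)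
    (xp : Fin m → Fin d → ℝ) (xn : Fin n → Fin d → ℝ) (w : Fin d → ℝ) :
    IsGreatest
      {v : ℝ | ∃ π : Fin m → Fin n → Bool,
        v = deltaAUC π -
            dot w (phiMap xp xn (fun _ _ => false) - phiMap xp xn π)}
      ((1 / ((m : ℝ) * n)) * ∑ i, ∑ j, max (1 - dot w (xp i - xn j)) 0) := by
  constructor
  · refine ⟨fun i j => decide (0 ≤ 1 - dot w (xp i - xn j)), ?_⟩
    rw [obj_eq]
    congr 1
    refine Finset.sum_congr rfl fun i _ => Finset.sum_congr rfl fun j _ => ?_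
    by_cases h : 0 ≤ 1 - dot w (xp i - xn j)
    · simp [h, max_eq_left h]
    · simp [h, max_eq_right (le_of_not_ge h)]
  · rintro v ⟨π, rfl⟩
    rw [obj_eq]
    have hpos : (0:ℝ) ≤ 1 / ((m : ℝ) * n) := by positivity
    apply mul_le_mul_of_nonneg_left _ hpos
    refine Finset.sum_le_sum fun i _ => Finset.sum_le_sum fun j _ => ?_
    by_cases h : π i j <;> simp [h, le_max_left, le_max_right]
end

section
/- Fix w ∈ ℝ^d, positives x⁺_1,…,x⁺_m, and negatives z̄_1,…,z̄_{j_β} sorted so that wᵀz̄_1 ≥ … ≥ wᵀz̄_{j_β}. Define for a valid ordering matrix π ∈ Π_{m,j_β} the objective H(π) = Δ^tr_pAUC(π*,π) − wᵀ(φ(π*) − φ(π)) where Δ^tr_pAUC(π*,π) = (1/(m(j_β−j_α))) Σ_i Σ_{j=j_α+1}^{j_β} π_{i,(j)_π} and φ(π) = (1/(m j_β)) Σ_{i,j}(1−π_{ij})(x⁺_i − z̄_j). Then every maximizer π̄ of H over Π_{m,j_β} satisfies: for all i and all j₁ < j₂, π̄_{i,j₁} ≥ π̄_{i,j₂} (i.e.,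 the maximizer lies in the restricted set Π^w_{m,j_β} where negatives separated by a positive are sorted according to w). -/
/-- Theorem 7 of the paper: every maximizer of the structural objective
H(π) = Δ^tr_pAUC(π*,π) − wᵀ(φ(π*) − φ(π)) over valid ordering matrices (with the
j_β negatives z̄_1,…,z̄_{j_β} pre-sorted by w, strictly decreasing scores) has
nonincreasing rows, i.e., lies in the restricted set Π^w_{m,j_β}.
Here π is a {0,1}^{m×k} matrix (k = j_β), a ranking permutation σ orders the
negatives in an ordering consistent with π (descending scores), and validity of
(π,σ) means π is induced by scores sp, sn with sn∘σ nonincreasing. -/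
theorem stmt8 (d m k ja : ℕ) (hja : ja < k) (w : Fin d → ℝ)
    (xp : Fin m → Fin d → ℝ) (z : Fin k → Fin d → ℝ)
    (hsorted : ∀ j₁ j₂ : Fin k, j₁ < j₂ → dot w (z j₂) < dot w (z j₁))
    (H : (Fin m → Fin k → Bool) → Equiv.Perm (Fin k) → ℝ)
    (hH : ∀ π σ, H π σ =
      (1 / ((m : ℝ) * ((k : ℝ) - (ja : ℝ)))) *
          ∑ i, ∑ j ∈ (Finset.univ : Finset (Fin k)).filter (fun j : Fin k => ja ≤ (j : ℕ)),
            (if π i (σ j) then (1 : ℝ) else 0)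
        - (1 / ((m : ℝ) * k)) *
            ∑ i, ∑ j, (if π i j then (1 : ℝ) else 0) * (dot w (xp i) - dot w (z j)))
    (valid : (Fin m → Fin k → Bool) → Equiv.Perm (Fin k) → Prop)
    (hvalid : ∀ π σ, valid π σ ↔
      ∃ (sp : Fin m → ℝ) (sn : Fin k → ℝ),
        (∀ i j, π i j = true ↔ sp i < sn j) ∧
        (∀ j₁ j₂ : Fin k, j₁ ≤ j₂ → sn (σ j₂) ≤ sn (σ j₁)))
    (πbar : Fin m → Fin k → Bool) (σbar : Equiv.Perm (Fin k))
    (hbarvalid : valid πbar σbar)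
    (hmax : ∀ π σ, valid π σ → H π σ ≤ H πbar σbar) :
    ∀ (i : Fin m) (j₁ j₂ : Fin k), j₁ < j₂ → πbar i j₂ = true → πbar i j₁ = true := by

  intro i j₁ j₂ hlt h2
  by_contra h1
  rw [Bool.not_eq_true] at h1
  obtain ⟨sp, sn, hπ, hmono⟩ := (hvalid πbar σbar).mp hbarvalid
  have hsp2 : sp i < sn j₂ := (hπ i j₂).mp h2
  have hsp1 : sn j₁ ≤ sp i := by
    by_contra h
    push_neg at h
    have := (hπ i j₁).mpr h
    rw [h1] at this
    exact Bool.false_ne_true this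
  have h12 : sn j₁ < sn j₂ := lt_of_le_of_lt hsp1 hsp2
  have hrow : ∀ i', πbar i' j₁ = true → πbar i' j₂ = true := fun i' h =>
    (hπ i' j₂).mpr (lt_trans ((hπ i' j₁).mp h) h12)
  set e := Equiv.swap j₁ j₂ with he
  set π' : Fin m → Fin k → Bool := fun i' j => πbar i' (e j) with hπ'def
  set σ' : Equiv.Perm (Fin k) := σbar.trans e with hσ'def
  have hvalid' : valid π' σ' := by
    rw [hvalid]
    refine ⟨sp, fun j => sn (e j), fun i' j => hπ i' (e j), fun a b hab => ?_⟩
    simpa [hσ'def, he, Equiv.swap_apply_self] using hmono a b hab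
  have hle := hmax π' σ' hvalid'
  have hne : j₁ ≠ j₂ := ne_of_lt hlt
  have hz : dot w (z j₂) < dot w (z j₁) := hsorted j₁ j₂ hlt
  have hm : (0:ℝ) < m := by exact_mod_cast i.pos
  have hk : (0:ℝ) < k := by exact_mod_cast lt_of_le_of_lt (Nat.zero_le ja) hja
  -- reindexed form of the second sum for π'
  have hrow' : ∀ i' : Fin m,
      (∑ j, (if π' i' j then (1:ℝ) else 0) * (dot w (xp i') - dot w (z j)))
        = ∑ j, (if πbar i' j then (1:ℝ) else 0) * (dot w (xp i') - dot w (z (e j))) := by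
    intro i'
    rw [← Equiv.sum_comp e
      (fun j => (if πbar i' j then (1:ℝ) else 0) * (dot w (xp i') - dot w (z (e j))))]
    simp [hπ'def, he, Equiv.swap_apply_self]
  have hdiff : ∀ i' : Fin m,
      (∑ j, (if πbar i' j then (1:ℝ) else 0) * (dot w (xp i') - dot w (z j)))
        - (∑ j, (if πbar i' j then (1:ℝ) else 0) * (dot w (xp i') - dot w (z (e j))))
      = ((if πbar i' j₂ then (1:ℝ) else 0) - (if πbar i' j₁ then (1:ℝ) else 0))
          * (dot w (z j₁) - dot w (z j₂)) := by
    intro i'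
    rw [← Finset.sum_sub_distrib]
    have hterm : ∀ j, (if πbar i' j then (1:ℝ) else 0) * (dot w (xp i') - dot w (z j))
        - (if πbar i' j then (1:ℝ) else 0) * (dot w (xp i') - dot w (z (e j)))
        = (if πbar i' j then (1:ℝ) else 0) * (dot w (z (e j)) - dot w (z j)) := fun j => by ring
    simp_rw [hterm]
    rw [← Finset.sum_subset (Finset.subset_univ ({j₁, j₂} : Finset (Fin k)))]
    · rw [Finset.sum_pair hne, he, Equiv.swap_apply_left, Equiv.swap_apply_right]
      ring
    · intro j _ hj
      simp only [Finset.mem_insert, Finset.mem_singleton, not_or] at hj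
      rw [he, Equiv.swap_apply_of_ne_of_ne hj.1 hj.2]
      ring
  have hdiffnonneg : ∀ i' : Fin m,
      (0:ℝ) ≤ ((if πbar i' j₂ then (1:ℝ) else 0) - (if πbar i' j₁ then (1:ℝ) else 0))
          * (dot w (z j₁) - dot w (z j₂)) := by
    intro i'
    apply mul_nonneg _ (by linarith)
    by_cases hb : πbar i' j₁ = true
    · rw [hrow i' hb]
      simp [hb]
    · rw [Bool.not_eq_true] at hb
      rw [hb]
      simp
      positivity
  have hSlt : (∑ i', ∑ j, (if π' i' j then (1:ℝ) else 0) * (dot w (xp i') - dot w (z j)))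
      < ∑ i', ∑ j, (if πbar i' j then (1:ℝ) else 0) * (dot w (xp i') - dot w (z j)) := by
    rw [← sub_pos, ← Finset.sum_sub_distrib]
    have : ∀ i' : Fin m,
        (∑ j, (if πbar i' j then (1:ℝ) else 0) * (dot w (xp i') - dot w (z j)))
          - (∑ j, (if π' i' j then (1:ℝ) else 0) * (dot w (xp i') - dot w (z j)))
        = ((if πbar i' j₂ then (1:ℝ) else 0) - (if πbar i' j₁ then (1:ℝ) else 0))
            * (dot w (z j₁) - dot w (z j₂)) := by
      intro i'
      rw [hrow' i', hdiff i']
    simp_rw [this]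
    apply Finset.sum_pos' (fun i' _ => hdiffnonneg i')
    refine ⟨i, Finset.mem_univ i, ?_⟩
    rw [h2, h1]
    simp
    linarith
  have hkey : H πbar σbar < H π' σ' := by
    rw [hH, hH]
    have hfirst : (∑ i', ∑ j ∈ (Finset.univ : Finset (Fin k)).filter
          (fun j : Fin k => ja ≤ (j : ℕ)), (if π' i' (σ' j) then (1:ℝ) else 0))
        = ∑ i', ∑ j ∈ (Finset.univ : Finset (Fin k)).filter
          (fun j : Fin k => ja ≤ (j : ℕ)), (if πbar i' (σbar j) then (1:ℝ) else 0) := by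
      simp [hπ'def, hσ'def, he, Equiv.swap_apply_self]
    rw [hfirst]
    have hc : (0:ℝ) < 1 / ((m : ℝ) * k) := by positivity
    have := mul_lt_mul_of_pos_left hSlt hc
    linarith
  exact absurd hle (not_le.mpr hkey)
end

section
/- The hinge partial AUC surrogate over [α,β] decomposes as a difference of convex functions: for any w and sample S, (j_β − j_α)·R̂^hinge_{pAUC(α,β)}(w;S) = j_β·R̂^hinge_{pAUC(0,β)}(w;S) − j_α·R̂^hinge_{pAUC(0,α)}(w;S), where R̂^hinge_{pAUC(0,γ)}(w;S) = (1/(m j_γ)) Σ_{i=1}^m Σ_{j=1}^{j_γ} (1 − wᵀ(x⁺_i − x⁻_{(j)_w}))₊ and each R̂^hinge_{pAUC(0,γ)} is convex in w. -/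
open Finset

theorem sum_le_sum_of_card_eq_of_le_on_sdiff {ι M : Type*} [AddCommMonoid M] [LinearOrder M]
    [IsOrderedCancelAddMonoid M] [DecidableEq ι] {s t : Finset ι} {f : ι → M}
    (hcard : #s = #t) (h : ∀ i ∈ s \ t, ∀ j ∈ t \ s, f i ≤ f j) :
    ∑ i ∈ s, f i ≤ ∑ i ∈ t, f i := by
  rw [← sum_sdiff_le_sum_sdiff]
  have hcard' : #(s \ t) = #(t \ s) := card_sdiff_comm hcard
  rcases (t \ s).eq_empty_or_nonempty with hts | hts
  · rw [hts, card_empty, card_eq_zero] at hcard'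
    simp [hts, hcard']
  · calc ∑ i ∈ s \ t, f i ≤ #(s \ t) • (t \ s).inf' hts f :=
          sum_le_card_nsmul _ _ _ fun i hi => le_inf' _ _ (h i hi)
      _ = #(t \ s) • (t \ s).inf' hts f := by rw [hcard']
      _ ≤ ∑ j ∈ t \ s, f j := card_nsmul_le_sum _ _ _ fun j hj => inf'_le _ hj

theorem sort_univ_val_map_eq_ofFn_comp_sort {α : Type*} [LinearOrder α] {n : ℕ}
    (s : Fin n → α) :
    (univ.val.map s).sort (· ≤ ·) = List.ofFn (s ∘ Tuple.sort s) := by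
  refine List.Perm.eq_of_sortedLE (List.sortedLE_iff_pairwise.2 (Multiset.pairwise_sort _ _))
    (Tuple.monotone_sort s).sortedLE_ofFn ?_
  refine List.Perm.trans ?_ ((Tuple.sort s).ofFn_comp_perm s).symm
  rw [← Multiset.coe_eq_coe, Multiset.sort_eq, Fin.univ_val_map]

theorem sum_Icc_getD_sort_eq {α β : Type*} [LinearOrder α] [AddCommMonoid β] {n k : ℕ}
    (s : Fin n → α) (a₀ : α) (f : α → β) (hk : k ≤ n) :
    ∑ j ∈ Icc 1 k, f (((univ.val.map s).sort (· ≤ ·)).getD (n - j) a₀)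
      = ∑ i : Fin k, f (s (Tuple.sort s (Fin.castLE hk i).rev)) := by
  rw [sort_univ_val_map_eq_ofFn_comp_sort]
  refine sum_bij' (fun j hj => (⟨j - 1, by grind⟩ : Fin k)) (fun i _ => (i : ℕ) + 1)
    (by simp) (fun i _ => by simp) (fun j hj => by simp at hj ⊢; omega) (by simp) ?_
  intro j hj
  rw [mem_Icc] at hj
  rw [List.getD_eq_getElem _ _ (by simp; omega), List.getElem_ofFn]
  congr 3
  simp
  omega

theorem sum_top_eq_sup'_powersetCard {α β : Type*} [LinearOrder α] [AddCommMonoid β]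
    [LinearOrder β] [IsOrderedCancelAddMonoid β] {n k : ℕ} (s : Fin n → α) {g : α → β}
    (hg : Monotone g) (hk : k ≤ n) :
    ∑ i : Fin k, g (s (Tuple.sort s (Fin.castLE hk i).rev))
      = (powersetCard k univ).sup' (powersetCard_nonempty.2 (by simpa))
          fun T => ∑ l ∈ T, g (s l) := by
  set σ := Tuple.sort s
  have hanti : Antitone (s ∘ σ ∘ Fin.rev) := (Tuple.monotone_sort s).comp_antitone Fin.rev_anti
  set τ : Fin k ↪ Fin n := (Fin.castLEEmb hk).trans (Fin.revPerm.trans σ).toEmbedding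
  have hB : univ.map τ ∈ powersetCard k univ := by simp
  have hsumB : ∑ l ∈ univ.map τ, g (s l) = ∑ i : Fin k, g (s (σ (Fin.castLE hk i).rev)) := by
    simp [τ]
  refine le_antisymm (hsumB ▸ le_sup' (fun T => ∑ l ∈ T, g (s l)) hB) (sup'_le _ _ fun T hT => ?_)
  rw [← hsumB]
  refine sum_le_sum_of_card_eq_of_le_on_sdiff (by simpa using hT) fun a ha b hb => hg ?_
  obtain ⟨i, -, rfl⟩ := mem_map.1 (mem_sdiff.1 hb).1
  -- `c` is the rank of `a` when the scores are listed in decreasing order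
  obtain ⟨c, rfl⟩ : ∃ c, σ c.rev = a := ⟨(σ.symm a).rev, by simp⟩
  have hkc : k ≤ c := by
    by_contra! hck
    exact (mem_sdiff.1 ha).2 (mem_map.2 ⟨⟨c, hck⟩, mem_univ _, by simp [τ]⟩)
  exact hanti (show Fin.castLE hk i ≤ c by simp [Fin.le_def]; omega)

section Convexity

variable {𝕜 E β ι : Type*} [Semiring 𝕜] [PartialOrder 𝕜] [AddCommMonoid E] [SMul 𝕜 E]
  {s : Set E}

theorem convexOn_finset_sum [AddCommMonoid β] [PartialOrder β] [IsOrderedAddMonoid β]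
    [Module 𝕜 β] (hs : Convex 𝕜 s) {t : Finset ι} {f : ι → E → β}
    (hf : ∀ i ∈ t, ConvexOn 𝕜 s (f i)) : ConvexOn 𝕜 s fun x => ∑ i ∈ t, f i x := by
  induction t using Finset.cons_induction with
  | empty => simpa using convexOn_const (0 : β) hs
  | cons a t ha ih =>
    simp only [sum_cons]
    exact (hf a (mem_cons_self a t)).add (ih fun i hi => hf i (mem_cons_of_mem hi))

theorem convexOn_finset_sup' [AddCommMonoid β] [LinearOrder β] [IsOrderedAddMonoid β]
    [Module 𝕜 β] [PosSMulStrictMono 𝕜 β] {t : Finset ι} (ht : t.Nonempty) {f : ι → E → β}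
    (hf : ∀ i ∈ t, ConvexOn 𝕜 s (f i)) : ConvexOn 𝕜 s fun x => t.sup' ht fun i => f i x := by
  induction ht using Finset.Nonempty.cons_induction with
  | singleton a => simpa using hf a (mem_singleton_self a)
  | cons a t ha ht ih =>
    simp only [sup'_cons ht]
    exact (hf a (mem_cons_self a t)).sup (ih fun i hi => hf i (mem_cons_of_mem hi))

end Convexity

theorem convexOn_hinge {d : ℕ} (x y : Fin d → ℝ) :
    ConvexOn ℝ Set.univ fun w => max (1 - (dot w x - dot w y)) 0 := by
  have hlin : ∀ w, dot w x - dot w y = (dotProductBilin ℝ ℝ).flip (x - y) w :=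
    fun w => (dotProduct_sub w x y).symm
  simp_rw [hlin]
  exact ((convexOn_const 1 convex_univ).sub (LinearMap.concaveOn _ convex_univ)).sup
    (convexOn_const 0 convex_univ)

noncomputable def hingeSum {m n d : ℕ} (xp : Fin m → Fin d → ℝ) (xn : Fin n → Fin d → ℝ)
    (ja jb : ℕ) (w : Fin d → ℝ) : ℝ :=
  ∑ i, ∑ j ∈ Icc (ja + 1) jb, max (1 - (dot w (xp i) - kthScore w xn j)) 0

section Surrogate

variable {m n d : ℕ} (xp : Fin m → Fin d → ℝ) (xn : Fin n → Fin d → ℝ)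

theorem sub_mul_hingeSurr (ja jb : ℕ) (w : Fin d → ℝ) :
    ((jb : ℝ) - ja) * hingeSurr xp xn ja jb w = (m : ℝ)⁻¹ * hingeSum xp xn ja jb w := by
  rcases eq_or_ne ((jb : ℝ) - ja) 0 with h | h
  · obtain rfl : jb = ja := by exact_mod_cast sub_eq_zero.1 h
    simp [hingeSum]
  · rw [hingeSurr, hingeSum, one_div, mul_inv, mul_comm (m : ℝ)⁻¹, ← mul_assoc, ← mul_assoc,
      mul_inv_cancel₀ h, one_mul]

theorem hingeSum_add_hingeSum {ja jb jc : ℕ} (hab : ja ≤ jb) (hbc : jb ≤ jc) (w : Fin d → ℝ) :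
    hingeSum xp xn ja jb w + hingeSum xp xn jb jc w = hingeSum xp xn ja jc w := by
  simp only [hingeSum, ← sum_add_distrib, Icc_add_one_left_eq_Ioc]
  exact sum_congr rfl fun i _ => sum_Ioc_consecutive _ hab hbc

theorem hingeSum_zero_eq_sup' {k : ℕ} (hk : k ≤ n) (w : Fin d → ℝ) :
    hingeSum xp xn 0 k w = (powersetCard k univ).sup' (powersetCard_nonempty.2 (by simpa))
      fun T => ∑ l ∈ T, ∑ i, max (1 - (dot w (xp i) - dot w (xn l))) 0 := by
  have hg : Monotone fun z => ∑ i, max (1 - (dot w (xp i) - z)) 0 :=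
    fun z z' hz => sum_le_sum fun i _ => max_le_max (by linarith) le_rfl
  rw [hingeSum, sum_comm, zero_add, ← sum_top_eq_sup'_powersetCard _ hg hk]
  exact sum_Icc_getD_sort_eq (fun l => dot w (xn l)) 0
    (fun z => ∑ i, max (1 - (dot w (xp i) - z)) 0) hk

theorem convexOn_hingeSurr_zero {k : ℕ} (hk : k ≤ n) :
    ConvexOn ℝ Set.univ (hingeSurr xp xn 0 k) := by
  have h : hingeSurr xp xn 0 k = fun w => ((m : ℝ) * k)⁻¹ • hingeSum xp xn 0 k w := by
    funext w
    simp [hingeSurr, hingeSum]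
  simp_rw [h, hingeSum_zero_eq_sup' xp xn hk]
  refine ConvexOn.smul (by positivity) (convexOn_finset_sup' _ fun T _ => ?_)
  exact convexOn_finset_sum convex_univ fun l _ =>
    convexOn_finset_sum convex_univ fun i _ => convexOn_hinge (xp i) (xn l)

end Surrogate

/-- DC decomposition (Section 6): (j_β − j_α)·R̂^hinge_{pAUC(α,β)} =
j_β·R̂^hinge_{pAUC(0,β)} − j_α·R̂^hinge_{pAUC(0,α)}, and each R̂^hinge_{pAUC(0,γ)}
is convex in w. -/
theorem stmt11 (d m n ja jb : ℕ) (h1 : ja < jb) (h2 : jb ≤ n)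
    (xp : Fin m → Fin d → ℝ) (xn : Fin n → Fin d → ℝ) :
    (∀ w : Fin d → ℝ,
        ((jb : ℝ) - (ja : ℝ)) * hingeSurr xp xn ja jb w
          = (jb : ℝ) * hingeSurr xp xn 0 jb w - (ja : ℝ) * hingeSurr xp xn 0 ja w) ∧
    ConvexOn ℝ Set.univ (hingeSurr xp xn 0 jb) ∧
    ConvexOn ℝ Set.univ (hingeSurr xp xn 0 ja) := by
  refine ⟨fun w => ?_, convexOn_hingeSurr_zero xp xn h2,
    convexOn_hingeSurr_zero xp xn (h1.le.trans h2)⟩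
  have h0 (k : ℕ) : (k : ℝ) * hingeSurr xp xn 0 k w = (m : ℝ)⁻¹ * hingeSum xp xn 0 k w := by
    simpa using sub_mul_hingeSurr xp xn 0 k w
  rw [sub_mul_hingeSurr, h0, h0, ← hingeSum_add_hingeSum xp xn (Nat.zero_le ja) h1.le]
  ring
end

section
/- Upper bound in the characterization theorem: for 0 < α < β ≤ 1, any w ∈ ℝ^d, and any sample S, the tight structural SVM surrogate satisfies R̂^tight_{pAUC(α,β)}(w;S) ≤ (1/(m(j_β−j_α))) Σ_{i=1}^m [ Σ_{j=1}^{j_α} (−wᵀ(x⁺_i − x⁻_{(j)_w}))₊ + Σ_{j=j_α+1}^{j_β} (1 − wᵀ(x⁺_i − x⁻_{(j)_w}))₊ ], i.e., R̂^tight ≤ R̂^hinge_{pAUC(α,β)}(w;S) + η_{[0,α]}(w). -/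
/-- The tight structural SVM surrogate R̂^tight_{pAUC(α,β)}(w;S) of Eqn. (27):
the maximum over matrices in the restricted set Π^w_{m,j_β} (parametrized by their
row thresholds r_i ∈ {0,…,j_β}, so that π_{i,(j)_w} = 1[j ≤ r_i]) of
(1/(m(j_β−j_α))) Σ_i [ −Σ_{j=1}^{j_α} π_{i,(j)_w} wᵀ(x⁺_i − x⁻_{(j)_w})
                      + Σ_{j=j_α+1}^{j_β} π_{i,(j)_w} (1 − wᵀ(x⁺_i − x⁻_{(j)_w})) ]. -/
noncomputable def Rtight {d m n : ℕ} (xp : Fin m → Fin d → ℝ) (xn : Fin n → Fin d → ℝ)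
    (ja jb : ℕ) (w : Fin d → ℝ) : ℝ :=
  ⨆ r : Fin m → Fin (jb + 1),
    (1 / ((m : ℝ) * ((jb : ℝ) - (ja : ℝ)))) * ∑ i,
      ((∑ j ∈ Finset.Icc 1 ja,
          (if j ≤ (r i : ℕ) then -(dot w (xp i) - kthScore w xn j) else 0)) +
       (∑ j ∈ Finset.Icc (ja + 1) jb,
          (if j ≤ (r i : ℕ) then 1 - (dot w (xp i) - kthScore w xn j) else 0)))

/-- Upper bound in Theorem 8 of the paper: R̂^tight_{pAUC(α,β)}(w;S) ≤
R̂^hinge_{pAUC(α,β)}(w;S) + η_{[0,α]}(w), obtained by relaxing the maximum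
entrywise. -/
theorem stmt12 (d m n ja jb : ℕ) (hja : 0 < ja) (h1 : ja < jb) (h2 : jb ≤ n)
    (xp : Fin m → Fin d → ℝ) (xn : Fin n → Fin d → ℝ) (w : Fin d → ℝ) :
    Rtight xp xn ja jb w ≤
      (1 / ((m : ℝ) * ((jb : ℝ) - (ja : ℝ)))) * ∑ i,
        ((∑ j ∈ Finset.Icc 1 ja, max (-(dot w (xp i) - kthScore w xn j)) 0) +
         (∑ j ∈ Finset.Icc (ja + 1) jb, max (1 - (dot w (xp i) - kthScore w xn j)) 0)) := by
  apply ciSup_le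
  intro r
  apply mul_le_mul_of_nonneg_left
  · apply Finset.sum_le_sum
    intro i _
    apply add_le_add
    · apply Finset.sum_le_sum
      intro j _
      split
      · exact le_max_left _ _
      · exact le_max_right _ _
    · apply Finset.sum_le_sum
      intro j _
      split
      · exact le_max_left _ _
      · exact le_max_right _ _
  · apply one_div_nonneg.mpr
    apply mul_nonneg (Nat.cast_nonneg m)
    have : (ja : ℝ) < jb := by exact_mod_cast h1
    linarith
end

section
/- Margin-separation equality: if w ∈ ℝ^d satisfies |wᵀx⁺_i − wᵀx⁻_j| ≥ 1 for all i ∈ {1,…,m} and j ∈ {1,…,n}, then the tight structural SVM surrogate for pAUC over [α,β] satisfies R̂^tight_{pAUC(α,β)}(w;S) = R̂^hinge_{pAUC(α,β)}(w;S) + η_{[0,α]}(w), where η_{[0,α]}(w) = (1/(m(j_β−j_α))) Σ_{i=1}^m Σ_{j=1}^{j_α} (−wᵀ(x⁺_i − x⁻_{(j)_w}))₊. -/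
/-
The supremum defining `Rtight` runs over independent thresholds `r i`, one per positive, so
it splits into a sum of row-wise maxima. Termwise, `if j ≤ r then a else 0 ≤ max a 0`, so each
row is at most its hinge row. Equality is attained at the threshold counting the negatives
ranked above `x⁺_i`: since the ranked scores decrease, these are exactly the `j ≤ r` with
`wᵀ(x⁺_i − x⁻_(j)) < 0`, where the hinge term is the selected branch; for the other `j`
the margin forces `wᵀ(x⁺_i − x⁻_(j)) ≥ 1`, so the hinge term vanishes.
-/

open Finset

theorem ciSup_sum_apply_eq {ι κ α : Type*} [Fintype ι] [Finite κ] [ConditionallyCompleteLattice α]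
    [AddCommMonoid α] [IsOrderedAddMonoid α] {f : ι → κ → α} {M : ι → α}
    (hle : ∀ i k, f i k ≤ M i) (hattain : ∀ i, ∃ k, f i k = M i) :
    ⨆ r : ι → κ, ∑ i, f i (r i) = ∑ i, M i := by
  choose r₀ hr₀ using hattain
  have : Nonempty (ι → κ) := ⟨r₀⟩
  refine le_antisymm (ciSup_le fun r => sum_le_sum fun i _ => hle i (r i)) ?_
  calc ∑ i, M i = ∑ i, f i (r₀ i) := by simp only [hr₀]
    _ ≤ _ := le_ciSup (f := fun r : ι → κ => ∑ i, f i (r i)) (Set.finite_range _).bddAbove r₀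

theorem le_card_filter_Icc_iff {p : ℕ → Prop} [DecidablePred p] {N j : ℕ}
    (hp : ∀ a b, 1 ≤ a → a ≤ b → b ≤ N → p b → p a) (hj₁ : 1 ≤ j) (hjN : j ≤ N) :
    j ≤ #{x ∈ Icc 1 N | p x} ↔ p j := by
  constructor
  · intro hj
    by_contra hpj
    have hsub : {x ∈ Icc 1 N | p x} ⊆ Icc 1 (j - 1) := fun x hx => by
      simp only [mem_filter, mem_Icc] at hx ⊢
      by_contra hxj
      exact hpj (hp j x hj₁ (by omega) hx.1.2 hx.2)
    have := card_le_card hsub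
    simp only [Nat.card_Icc] at this
    omega
  · intro hpj
    have hsub : Icc 1 j ⊆ {x ∈ Icc 1 N | p x} := fun x hx => by
      simp only [mem_filter, mem_Icc] at hx ⊢
      exact ⟨⟨hx.1, hx.2.trans hjN⟩, hp x j hx.1 hx.2 hjN hpj⟩
    simpa using card_le_card hsub

theorem ite_neg_lt_zero_eq_max (a : ℝ) : (if a < 0 then -a else 0) = max (-a) 0 := by
  split_ifs with ha
  · exact (max_eq_left (by linarith)).symm
  · exact (max_eq_right (by linarith)).symm

theorem ite_one_sub_lt_zero_eq_max {a : ℝ} (ha : 1 ≤ |a|) :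
    (if a < 0 then 1 - a else 0) = max (1 - a) 0 := by
  split_ifs with ha'
  · exact (max_eq_left (by linarith)).symm
  · rw [abs_of_nonneg (not_lt.mp ha')] at ha
    exact (max_eq_right (by linarith)).symm

section kthScore

variable {n d : ℕ} (w : Fin d → ℝ) (xn : Fin n → Fin d → ℝ)

theorem length_sort_scores :
    (((univ : Finset (Fin n)).val.map fun l => dot w (xn l)).sort (· ≤ ·)).length = n := by
  simp

theorem kthScore_eq_getElem {j : ℕ} (hj₁ : 1 ≤ j) (hjn : j ≤ n) :
    kthScore w xn j = (((univ : Finset (Fin n)).val.map fun l => dot w (xn l)).sort (· ≤ ·))[n - j]'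
      (by rw [length_sort_scores]; omega) :=
  List.getD_eq_getElem _ _ _

theorem exists_kthScore_eq {j : ℕ} (hj₁ : 1 ≤ j) (hjn : j ≤ n) :
    ∃ l, dot w (xn l) = kthScore w xn j := by
  rw [kthScore_eq_getElem w xn hj₁ hjn]
  have hmem := List.getElem_mem (l := ((univ : Finset (Fin n)).val.map fun l => dot w (xn l)).sort
    (· ≤ ·)) (n := n - j) (by rw [length_sort_scores]; omega)
  rw [Multiset.mem_sort, Multiset.mem_map] at hmem
  obtain ⟨l, -, hl⟩ := hmem
  exact ⟨l, hl⟩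

theorem kthScore_antitoneOn : AntitoneOn (kthScore w xn) (Set.Icc 1 n) := by
  rintro j ⟨hj₁, hjn⟩ j' ⟨hj'₁, hj'n⟩ hjj'
  rw [kthScore_eq_getElem w xn hj₁ hjn, kthScore_eq_getElem w xn hj'₁ hj'n]
  exact (Multiset.pairwise_sort _ _).sortedLE.getElem_le_getElem_of_le (by omega)

end kthScore

section Rows

variable (s : ℝ) (t : ℕ → ℝ) (ja jb : ℕ)

def tightRow (r : ℕ) : ℝ :=
  (∑ j ∈ Icc 1 ja, if j ≤ r then -(s - t j) else 0) +
    ∑ j ∈ Icc (ja + 1) jb, if j ≤ r then 1 - (s - t j) else 0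

def hingeRow : ℝ :=
  (∑ j ∈ Icc 1 ja, max (-(s - t j)) 0) + ∑ j ∈ Icc (ja + 1) jb, max (1 - (s - t j)) 0

theorem tightRow_le_hingeRow (r : ℕ) : tightRow s t ja jb r ≤ hingeRow s t ja jb := by
  unfold tightRow hingeRow
  gcongr with j _ j _ <;> split_ifs <;> simp

variable {s t ja jb}

theorem tightRow_card_filter_eq_hingeRow (ht : AntitoneOn t (Set.Icc 1 jb))
    (hmargin : ∀ j ∈ Icc 1 jb, 1 ≤ |s - t j|) (hjab : ja ≤ jb) :
    tightRow s t ja jb #{j ∈ Icc 1 jb | s < t j} = hingeRow s t ja jb := by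
  have hthreshold : ∀ j ∈ Icc 1 jb, j ≤ #{j ∈ Icc 1 jb | s < t j} ↔ s - t j < 0 := by
    intro j hj
    rw [mem_Icc] at hj
    rw [sub_neg]
    exact le_card_filter_Icc_iff (fun a b ha hab hb hsb => hsb.trans_le
      (ht ⟨ha, hab.trans hb⟩ ⟨ha.trans hab, hb⟩ hab)) hj.1 hj.2
  unfold tightRow hingeRow
  congr 1
  · refine sum_congr rfl fun j hj => ?_
    have hj' : j ∈ Icc 1 jb := by simp only [mem_Icc] at hj ⊢; omega
    rw [if_congr (hthreshold j hj') rfl rfl, ite_neg_lt_zero_eq_max]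
  · refine sum_congr rfl fun j hj => ?_
    have hj' : j ∈ Icc 1 jb := by simp only [mem_Icc] at hj ⊢; omega
    rw [if_congr (hthreshold j hj') rfl rfl, ite_one_sub_lt_zero_eq_max (hmargin j hj')]

end Rows

theorem exists_tightRow_kthScore_eq_hingeRow {n d : ℕ} (w : Fin d → ℝ) (xn : Fin n → Fin d → ℝ)
    {s : ℝ} {ja jb : ℕ} (hs : ∀ l, 1 ≤ |s - dot w (xn l)|) (hjab : ja ≤ jb) (hjb : jb ≤ n) :
    ∃ r : Fin (jb + 1), tightRow s (kthScore w xn) ja jb r = hingeRow s (kthScore w xn) ja jb := by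
  have hcard : #{j ∈ Icc 1 jb | s < kthScore w xn j} < jb + 1 := by
    have := card_filter_le (Icc 1 jb) fun j => s < kthScore w xn j
    simp only [Nat.card_Icc] at this
    omega
  refine ⟨⟨_, hcard⟩, tightRow_card_filter_eq_hingeRow
    ((kthScore_antitoneOn w xn).mono (Set.Icc_subset_Icc_right hjb)) (fun j hj => ?_) hjab⟩
  rw [mem_Icc] at hj
  obtain ⟨l, hl⟩ := exists_kthScore_eq w xn hj.1 (hj.2.trans hjb)
  exact hl ▸ hs l

theorem stmt13_general (d m n ja jb : ℕ) (h1 : ja < jb) (h2 : jb ≤ n)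
    (xp : Fin m → Fin d → ℝ) (xn : Fin n → Fin d → ℝ) (w : Fin d → ℝ)
    (hmargin : ∀ i j, 1 ≤ |dot w (xp i) - dot w (xn j)|) :
    Rtight xp xn ja jb w =
      (1 / ((m : ℝ) * ((jb : ℝ) - (ja : ℝ)))) *
          ∑ i, ∑ j ∈ Finset.Icc (ja + 1) jb, max (1 - (dot w (xp i) - kthScore w xn j)) 0
      + (1 / ((m : ℝ) * ((jb : ℝ) - (ja : ℝ)))) *
          ∑ i, ∑ j ∈ Finset.Icc 1 ja, max (-(dot w (xp i) - kthScore w xn j)) 0 := by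
  set C : ℝ := 1 / ((m : ℝ) * ((jb : ℝ) - (ja : ℝ)))
  have hC : 0 ≤ C := by
    have : (ja : ℝ) < jb := by exact_mod_cast h1
    exact one_div_nonneg.mpr (mul_nonneg m.cast_nonneg (by linarith))
  calc Rtight xp xn ja jb w = C *
        ⨆ r : Fin m → Fin (jb + 1), ∑ i, tightRow (dot w (xp i)) (kthScore w xn) ja jb (r i) :=
        (Real.mul_iSup_of_nonneg hC _).symm
    _ = C * ∑ i, hingeRow (dot w (xp i)) (kthScore w xn) ja jb :=
      congrArg _ (ciSup_sum_apply_eq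
        (f := fun i (r : Fin (jb + 1)) => tightRow (dot w (xp i)) (kthScore w xn) ja jb r)
        (fun _ _ => tightRow_le_hingeRow _ _ _ _ _)
        fun i => exists_tightRow_kthScore_eq_hingeRow w xn (hmargin i) h1.le h2)
    _ = _ := by
      simp only [hingeRow, sum_add_distrib]
      ring

/-- Margin-separation equality in Theorem 8 of the paper: if
|wᵀx⁺_i − wᵀx⁻_j| ≥ 1 for all i, j, then
R̂^tight_{pAUC(α,β)}(w;S) = R̂^hinge_{pAUC(α,β)}(w;S) + η_{[0,α]}(w). -/
theorem stmt13 (d m n ja jb : ℕ) (hja : 0 < ja) (h1 : ja < jb) (h2 : jb ≤ n)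
    (xp : Fin m → Fin d → ℝ) (xn : Fin n → Fin d → ℝ) (w : Fin d → ℝ)
    (hmargin : ∀ i j, 1 ≤ |dot w (xp i) - dot w (xn j)|) :
    Rtight xp xn ja jb w =
      (1 / ((m : ℝ) * ((jb : ℝ) - (ja : ℝ)))) *
          ∑ i, ∑ j ∈ Finset.Icc (ja + 1) jb, max (1 - (dot w (xp i) - kthScore w xn j)) 0
      + (1 / ((m : ℝ) * ((jb : ℝ) - (ja : ℝ)))) *
          ∑ i, ∑ j ∈ Finset.Icc 1 ja, max (-(dot w (xp i) - kthScore w xn j)) 0 :=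
  stmt13_general d m n ja jb h1 h2 xp xn w hmargin
end

section
/- Lower bound in the characterization theorem: for 0 < α < β ≤ 1, any w, and any sample S, R̂^tight_{pAUC(α,β)}(w;S) ≥ (1/(m(j_β−j_α))) [ Σ_{i : wᵀx⁺_i < wᵀx⁻_{(j_α)_w}} ( Σ_{j=1}^{j_α} (−wᵀ(x⁺_i − x⁻_{(j)_w}))₊ + Σ_{j=j_α+1}^{j_β} (1 − wᵀ(x⁺_i − x⁻_{(j)_w}))₊ ) + Σ_{i : wᵀx⁺_i ≥ wᵀx⁻_{(j_α)_w}} Σ_{j=1}^{j_α} (−wᵀ(x⁺_i − x⁻_{(j)_w}))₊ ]. -/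
lemma kth_anti {n d : ℕ} (w : Fin d → ℝ) (xn : Fin n → Fin d → ℝ) {j j' : ℕ}
    (h1 : 1 ≤ j) (h2 : j ≤ j') (h3 : j' ≤ n) : kthScore w xn j' ≤ kthScore w xn j := by
  set L := (((Finset.univ : Finset (Fin n)).val.map fun l => dot w (xn l)).sort (· ≤ ·)) with hL
  have hlen : L.length = n := by simp [hL, Multiset.length_sort]
  have hs : L.Pairwise (· ≤ ·) := Multiset.pairwise_sort _ _
  have hi2 : n - j < L.length := by omega
  have hi1 : n - j' < L.length := by omega
  have hle : n - j' ≤ n - j := by omega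
  unfold kthScore
  rw [← hL, List.getD_eq_getElem L 0 hi1, List.getD_eq_getElem L 0 hi2]
  rcases lt_or_eq_of_le hle with h | h
  · exact List.pairwise_iff_getElem.mp hs _ _ hi1 hi2 h
  · simp [h]

/-- Lower bound in Theorem 8 of the paper: R̂^tight_{pAUC(α,β)}(w;S) is at least the
sum, over positives scored below the j_α-th ranked negative, of both hinge blocks,
plus, over the remaining positives, the zero-margin block on the top-j_α negatives. -/
theorem stmt14 (d m n ja jb : ℕ) (hja : 0 < ja) (h1 : ja < jb) (h2 : jb ≤ n)
    (xp : Fin m → Fin d → ℝ) (xn : Fin n → Fin d → ℝ) (w : Fin d → ℝ) :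
    (1 / ((m : ℝ) * ((jb : ℝ) - (ja : ℝ)))) *
      ((∑ i ∈ Finset.univ.filter (fun i => dot w (xp i) < kthScore w xn ja),
          ((∑ j ∈ Finset.Icc 1 ja, max (-(dot w (xp i) - kthScore w xn j)) 0) +
           (∑ j ∈ Finset.Icc (ja + 1) jb, max (1 - (dot w (xp i) - kthScore w xn j)) 0))) +
       (∑ i ∈ Finset.univ.filter (fun i => kthScore w xn ja ≤ dot w (xp i)),
          ∑ j ∈ Finset.Icc 1 ja, max (-(dot w (xp i) - kthScore w xn j)) 0))
      ≤ Rtight xp xn ja jb w := by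
  classical
  set s : Fin m → ℝ := fun i => dot w (xp i) with hs
  set k : ℕ → ℝ := fun j => kthScore w xn j with hk
  -- the chosen row thresholds
  set rN : Fin m → ℕ := fun i =>
    if s i < k ja then
      max ((Finset.Icc (ja + 1) jb).sup (fun j => if s i - 1 ≤ k j then j else 0)) ja
    else
      (Finset.Icc 1 ja).sup (fun j => if s i < k j then j else 0) with hrN
  have hrNle : ∀ i, rN i ≤ jb := by
    intro i
    simp only [hrN]
    split
    · refine max_le (Finset.sup_le fun j hj => ?_) h1.le
      rw [Finset.mem_Icc] at hj
      split <;> omega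
    · refine le_trans (Finset.sup_le fun j hj => ?_) h1.le
      rw [Finset.mem_Icc] at hj
      split <;> omega
  set rhat : Fin m → Fin (jb + 1) := fun i => ⟨rN i, Nat.lt_succ_of_le (hrNle i)⟩ with hrhat
  have key : (1 / ((m : ℝ) * ((jb : ℝ) - (ja : ℝ)))) *
      ((∑ i ∈ Finset.univ.filter (fun i => s i < k ja),
          ((∑ j ∈ Finset.Icc 1 ja, max (-(s i - k j)) 0) +
           (∑ j ∈ Finset.Icc (ja + 1) jb, max (1 - (s i - k j)) 0))) +
       (∑ i ∈ Finset.univ.filter (fun i => k ja ≤ s i),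
          ∑ j ∈ Finset.Icc 1 ja, max (-(s i - k j)) 0))
      ≤ (1 / ((m : ℝ) * ((jb : ℝ) - (ja : ℝ)))) * ∑ i,
      ((∑ j ∈ Finset.Icc 1 ja,
          (if j ≤ (rhat i : ℕ) then -(s i - k j) else 0)) +
       (∑ j ∈ Finset.Icc (ja + 1) jb,
          (if j ≤ (rhat i : ℕ) then 1 - (s i - k j) else 0))) := by
    have hcoef : (0:ℝ) ≤ 1 / ((m : ℝ) * ((jb : ℝ) - (ja : ℝ))) := by
      apply div_nonneg zero_le_one
      apply mul_nonneg (Nat.cast_nonneg _)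
      have : (ja : ℝ) ≤ (jb : ℝ) := Nat.cast_le.mpr h1.le
      linarith
    apply mul_le_mul_of_nonneg_left _ hcoef
    -- rewrite LHS as a single sum over univ
    have hsplit : (∑ i ∈ Finset.univ.filter (fun i => s i < k ja),
          ((∑ j ∈ Finset.Icc 1 ja, max (-(s i - k j)) 0) +
           (∑ j ∈ Finset.Icc (ja + 1) jb, max (1 - (s i - k j)) 0))) +
       (∑ i ∈ Finset.univ.filter (fun i => k ja ≤ s i),
          ∑ j ∈ Finset.Icc 1 ja, max (-(s i - k j)) 0)
        = ∑ i, (if s i < k ja then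
            ((∑ j ∈ Finset.Icc 1 ja, max (-(s i - k j)) 0) +
             (∑ j ∈ Finset.Icc (ja + 1) jb, max (1 - (s i - k j)) 0))
          else ∑ j ∈ Finset.Icc 1 ja, max (-(s i - k j)) 0) := by
      rw [Finset.sum_ite]
      congr 1
      apply Finset.sum_congr _ (fun _ _ => rfl)
      apply Finset.filter_congr
      intro i _
      simp [not_lt]
    rw [hsplit]
    apply Finset.sum_le_sum
    intro i _
    have hrv : (rhat i : ℕ) = rN i := rfl
    rw [hrv]
    by_cases hc : s i < k ja
    · -- case A
      simp only [hrN, if_pos hc]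
      set f : ℕ → ℕ := fun j => if s i - 1 ≤ k j then j else 0 with hf
      set r := max ((Finset.Icc (ja + 1) jb).sup f) ja with hr
      have hja_le_r : ja ≤ r := le_max_right _ _
      apply add_le_add
      · -- first block: every j ≤ ja ≤ r, and k j > s i
        apply Finset.sum_le_sum
        intro j hj
        rw [Finset.mem_Icc] at hj
        have hjr : j ≤ r := le_trans hj.2 hja_le_r
        rw [if_pos hjr]
        have hkj : s i < k j := lt_of_lt_of_le hc (kth_anti w xn hj.1 hj.2 (le_trans h1.le h2))
        have : max (-(s i - k j)) 0 = -(s i - k j) := max_eq_left (by linarith)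
        rw [this]
      · -- second block
        apply Finset.sum_le_sum
        intro j hj
        rw [Finset.mem_Icc] at hj
        by_cases hjr : j ≤ r
        · rw [if_pos hjr]
          -- show 1 - (s i - k j) ≥ 0, so max equals it
          have hjsup : j ≤ (Finset.Icc (ja + 1) jb).sup f := by
            rcases le_max_iff.mp hjr with h | h
            · exact h
            · omega
          obtain ⟨j0, hj0mem, hj0⟩ := Finset.exists_mem_eq_sup (Finset.Icc (ja + 1) jb)
            ⟨ja + 1, Finset.mem_Icc.mpr ⟨le_refl _, h1⟩⟩ f
          rw [Finset.mem_Icc] at hj0mem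
          rw [hj0] at hjsup
          have hfj0 : s i - 1 ≤ k j0 := by
            by_contra hcon
            simp only [hf, if_neg hcon] at hjsup
            omega
          have hj0j : j ≤ j0 := by
            simp only [hf, if_pos hfj0] at hjsup; exact hjsup
          have : s i - 1 ≤ k j := le_trans hfj0 (kth_anti w xn (by omega) hj0j (le_trans hj0mem.2 h2))
          have hmax : max (1 - (s i - k j)) 0 = 1 - (s i - k j) := max_eq_left (by linarith)
          rw [hmax]
        · rw [if_neg hjr]
          -- k j < s i - 1, so max = 0
          have : ¬ (s i - 1 ≤ k j) := by
            intro hcon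
            have : f j = j := by simp only [hf, if_pos hcon]
            have : j ≤ (Finset.Icc (ja + 1) jb).sup f := this ▸ Finset.le_sup (Finset.mem_Icc.mpr hj)
            exact hjr (le_trans this (le_max_left _ _))
          have hmax : max (1 - (s i - k j)) 0 = 0 := max_eq_right (by linarith)
          rw [hmax]
    · -- case B
      simp only [hrN, if_neg hc]
      set g : ℕ → ℕ := fun j => if s i < k j then j else 0 with hg
      set r := (Finset.Icc 1 ja).sup g with hr
      have hrja : r ≤ ja := Finset.sup_le fun j hj => by
        rw [Finset.mem_Icc] at hj; simp only [hg]; split <;> omega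
      have hsecond : (∑ j ∈ Finset.Icc (ja + 1) jb,
          (if j ≤ r then 1 - (s i - k j) else 0)) = 0 := by
        apply Finset.sum_eq_zero
        intro j hj
        rw [Finset.mem_Icc] at hj
        rw [if_neg (by omega)]
      rw [hsecond, add_zero]
      apply Finset.sum_le_sum
      intro j hj
      rw [Finset.mem_Icc] at hj
      by_cases hjr : j ≤ r
      · rw [if_pos hjr]
        obtain ⟨j0, hj0mem, hj0⟩ := Finset.exists_mem_eq_sup (Finset.Icc 1 ja)
          ⟨1, Finset.mem_Icc.mpr ⟨le_refl _, hja⟩⟩ g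
        rw [Finset.mem_Icc] at hj0mem
        rw [hr, hj0] at hjr
        have hfj0 : s i < k j0 := by
          by_contra hcon
          simp only [hg, if_neg hcon] at hjr
          omega
        have hj0j : j ≤ j0 := by
          simp only [hg, if_pos hfj0] at hjr; exact hjr
        have hkj : s i < k j := lt_of_lt_of_le hfj0
          (kth_anti w xn hj.1 hj0j (le_trans hj0mem.2 (le_trans h1.le h2)))
        have hmax : max (-(s i - k j)) 0 = -(s i - k j) := max_eq_left (by linarith)
        rw [hmax]
      · rw [if_neg hjr]
        have : ¬ (s i < k j) := by
          intro hcon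
          have hgj : g j = j := by simp only [hg, if_pos hcon]
          have : j ≤ r := hgj ▸ Finset.le_sup (Finset.mem_Icc.mpr hj)
          exact hjr this
        have hmax : max (-(s i - k j)) 0 = 0 := max_eq_right (by push_neg at this; linarith)
        rw [hmax]
  refine le_trans key ?_
  rw [Rtight]
  exact le_ciSup (f := fun r : Fin m → Fin (jb + 1) =>
    (1 / ((m : ℝ) * ((jb : ℝ) - (ja : ℝ)))) * ∑ i,
      ((∑ j ∈ Finset.Icc 1 ja,
          (if j ≤ (r i : ℕ) then -(dot w (xp i) - kthScore w xn j) else 0)) +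
       (∑ j ∈ Finset.Icc (ja + 1) jb,
          (if j ≤ (r i : ℕ) then 1 - (dot w (xp i) - kthScore w xn j) else 0))))
    (Set.Finite.bddAbove (Set.finite_range _)) rhat
end

section
/- For the partial AUC in [α,β], the empirical risk equals a max over subsets: R̂_{pAUC(α,β)}(w;S) = max over Z ⊆ S₋ with |Z| = j_β of R̃(w; S₊, Z), where for Z = {z_1,…,z_{j_β}} sorted so wᵀz_1 ≥ … ≥ wᵀz_{j_β}, R̃(w;S₊,Z) = (1/(m(j_β−j_α))) Σ_{i=1}^m Σ_{j=j_α+1}^{j_β} 1[wᵀx⁺_i ≤ wᵀz_j], and R̂_{pAUC(α,β)}(w;S) = (1/(m(j_β−j_α))) Σ_{i=1}^m Σ_{j=j_α+1}^{j_β} 1[wᵀx⁺_i ≤ wᵀx⁻_{(j)_w}]. -/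
namespace List

variable {α : Type*} [LinearOrder α] {l : List α}

theorem SortedLE.length_sub_le_countP_getElem_le (hl : l.SortedLE) {k : ℕ}
    (hk : k < l.length) : l.length - k ≤ l.countP (l[k] ≤ ·) := by
  have hdrop : (l.drop k).countP (l[k] ≤ ·) = (l.drop k).length := by
    refine countP_eq_length.2 fun x hx => ?_
    obtain ⟨i, hi, rfl⟩ := mem_iff_getElem.1 hx
    simpa using hl.getElem_le_getElem_of_le (Nat.le_add_right k i)
  rw [← length_drop, ← hdrop]
  exact (drop_sublist k l).countP_le

theorem SortedLE.countP_le_lt_length_sub (hl : l.SortedLE) {k : ℕ} (hk : k < l.length) {a : α}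
    (ha : l[k] < a) : l.countP (a ≤ ·) < l.length - k := by
  have htake : (l.take (k + 1)).countP (a ≤ ·) = 0 := by
    refine countP_eq_zero.2 fun x hx => ?_
    obtain ⟨i, hi, rfl⟩ := mem_iff_getElem.1 hx
    have hik : i ≤ k := by rw [length_take] at hi; omega
    simp [(hl.getElem_le_getElem_of_le hik).trans_lt ha]
  calc l.countP (a ≤ ·) = (l.take (k + 1)).countP (a ≤ ·) + (l.drop (k + 1)).countP (a ≤ ·) := by
        rw [← countP_append, take_append_drop]
    _ ≤ (l.drop (k + 1)).length := by rw [htake, zero_add]; exact countP_le_length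
    _ < l.length - k := by rw [length_drop]; omega

end List

namespace Multiset

variable {α β : Type*}

theorem exists_le_map_eq_of_le_map {f : α → β} {s : Multiset β} {t : Multiset α}
    (h : s ≤ t.map f) : ∃ u ≤ t, u.map f = s := by
  induction s using Quot.inductionOn
  induction t using Quot.inductionOn
  obtain ⟨l, hl, hsub⟩ := h
  obtain ⟨l', hl', rfl⟩ := List.sublist_map_iff.1 hsub
  exact ⟨l', hl'.subperm, Quot.sound hl⟩

variable [LinearOrder α]

theorem countP_sort (p : α → Prop) [DecidablePred p] (s : Multiset α) :
    (s.sort (· ≤ ·)).countP (p ·) = s.countP p := by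
  conv_rhs => rw [← s.sort_eq (· ≤ ·), coe_countP]

variable [Zero α]

/-- The `j`-th largest element, 1-indexed and with multiplicity; junk outside `1 ≤ j ≤ card s`. -/
def kthLargest (s : Multiset α) (j : ℕ) : α := (s.sort (· ≤ ·)).getD (card s - j) 0

variable {s t : Multiset α} {j : ℕ}

theorem kthLargest_eq_getElem (hj₁ : 1 ≤ j) (hj : j ≤ card s) :
    s.kthLargest j = (s.sort (· ≤ ·))[card s - j]'(by rw [length_sort]; omega) :=
  List.getD_eq_getElem ..

theorem le_countP_kthLargest_le (hj₁ : 1 ≤ j) (hj : j ≤ card s) :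
    j ≤ s.countP (s.kthLargest j ≤ ·) := by
  have hk : card s - j < (s.sort (· ≤ ·)).length := by rw [length_sort]; omega
  have := (s.pairwise_sort (· ≤ ·)).sortedLE.length_sub_le_countP_getElem_le hk
  rw [length_sort, countP_sort, Nat.sub_sub_self hj] at this
  rwa [kthLargest_eq_getElem hj₁ hj]

theorem countP_le_lt_of_kthLargest_lt (hj₁ : 1 ≤ j) (hj : j ≤ card s) {a : α}
    (ha : s.kthLargest j < a) : s.countP (a ≤ ·) < j := by
  have hk : card s - j < (s.sort (· ≤ ·)).length := by rw [length_sort]; omega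
  rw [kthLargest_eq_getElem hj₁ hj] at ha
  have := (s.pairwise_sort (· ≤ ·)).sortedLE.countP_le_lt_length_sub hk ha
  rwa [length_sort, countP_sort, Nat.sub_sub_self hj] at this

theorem kthLargest_mono (hst : s ≤ t) (hj₁ : 1 ≤ j) (hj : j ≤ card s) :
    s.kthLargest j ≤ t.kthLargest j := by
  by_contra! h
  have hs := le_countP_kthLargest_le hj₁ hj
  have ht := countP_le_lt_of_kthLargest_lt hj₁ (hj.trans (card_le_card hst)) h
  have := countP_le_of_le (s.kthLargest j ≤ ·) hst
  omega

theorem exists_le_card_eq_forall_kthLargest_eq (s : Multiset α) {k : ℕ} (hk : k ≤ card s) :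
    ∃ t ≤ s, card t = k ∧ ∀ j ≤ k, t.kthLargest j = s.kthLargest j := by
  set l := (s.sort (· ≤ ·)).drop (card s - k)
  have hsorted : l.Pairwise (· ≤ ·) := (s.pairwise_sort _).drop
  refine ⟨l, ?_, ?_, fun j hj => ?_⟩
  · conv_rhs => rw [← s.sort_eq (· ≤ ·)]
    exact coe_le.2 (List.drop_sublist _ _).subperm
  · rw [coe_card, List.length_drop, length_sort]; omega
  · simp only [kthLargest, coe_sort, List.mergeSort_eq_self _ hsorted, coe_card, l]
    simp only [List.getD_eq_getElem?_getD, List.getElem?_drop, List.length_drop, length_sort]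
    congr 3
    omega

end Multiset

theorem Finset.exists_subset_map_val_eq_of_le_map {ι β : Type*} {f : ι → β} {s : Finset ι}
    {t : Multiset β} (h : t ≤ s.val.map f) : ∃ Z ⊆ s, Z.val.map f = t := by
  obtain ⟨u, hu, rfl⟩ := Multiset.exists_le_map_eq_of_le_map h
  exact ⟨⟨u, Multiset.nodup_of_le hu s.nodup⟩, Finset.val_le_iff.1 hu, rfl⟩

theorem Finset.kthLargest_map_val {ι α : Type*} [LinearOrder α] [Zero α] (Z : Finset ι)
    (f : ι → α) (j : ℕ) :
    (Z.val.map f).kthLargest j = ((Z.val.map f).sort (· ≤ ·)).getD (Z.card - j) 0 := by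
  rw [Multiset.kthLargest, Multiset.card_map, Finset.card_def]

theorem kthScore_eq_kthLargest {n d : ℕ} (w : Fin d → ℝ) (xn : Fin n → Fin d → ℝ) :
    kthScore w xn = (Finset.univ.val.map fun l => dot w (xn l)).kthLargest := by
  ext j
  rw [Finset.kthLargest_map_val, Finset.card_univ, Fintype.card_fin, kthScore]

/-- Empirical partial AUC risk over `[α, β]` with `ja = ⌊nα⌋`, `jb = ⌈nβ⌉`, positive scores `p`,
and `g j` the score of the `j`-th ranked negative. -/
noncomputable def pAUCRisk {m : ℕ} (p : Fin m → ℝ) (g : ℕ → ℝ) (ja jb : ℕ) : ℝ :=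
  1 / ((m : ℝ) * ((jb : ℝ) - (ja : ℝ))) *
    ∑ i, ∑ j ∈ Finset.Icc (ja + 1) jb, if p i ≤ g j then (1 : ℝ) else 0

section pAUCRisk

variable {m : ℕ} (p : Fin m → ℝ) {g g' : ℕ → ℝ} {ja jb : ℕ}

theorem pAUCRisk_congr (h : ∀ j ∈ Finset.Icc (ja + 1) jb, g j = g' j) :
    pAUCRisk p g ja jb = pAUCRisk p g' ja jb := by
  unfold pAUCRisk
  congr 1
  exact Finset.sum_congr rfl fun i _ => Finset.sum_congr rfl fun j hj => by rw [h j hj]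

theorem pAUCRisk_mono (hjab : ja ≤ jb) (h : ∀ j ∈ Finset.Icc (ja + 1) jb, g j ≤ g' j) :
    pAUCRisk p g ja jb ≤ pAUCRisk p g' ja jb := by
  have hcoef : 0 ≤ 1 / ((m : ℝ) * ((jb : ℝ) - (ja : ℝ))) := by
    have : (ja : ℝ) ≤ jb := by exact_mod_cast hjab
    exact one_div_nonneg.2 (mul_nonneg m.cast_nonneg (sub_nonneg.2 this))
  unfold pAUCRisk
  gcongr with i _ j hj
  by_cases hg : p i ≤ g j
  · simp [hg, hg.trans (h j hj)]
  · split_ifs <;> norm_num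

end pAUCRisk

theorem stmt16_general (d m n ja jb : ℕ) (hja : ja < jb) (h2 : jb ≤ n)
    (xp : Fin m → Fin d → ℝ) (xn : Fin n → Fin d → ℝ) (w : Fin d → ℝ) :
    IsGreatest
      {v : ℝ | ∃ Z : Finset (Fin n), Z.card = jb ∧
        v = (1 / ((m : ℝ) * ((jb : ℝ) - (ja : ℝ)))) *
              ∑ i, ∑ j ∈ Finset.Icc (ja + 1) jb,
                (if dot w (xp i) ≤
                    ((Z.val.map fun l => dot w (xn l)).sort (· ≤ ·)).getD (jb - j) 0
                  then (1 : ℝ) else 0)}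
      ((1 / ((m : ℝ) * ((jb : ℝ) - (ja : ℝ)))) *
        ∑ i, ∑ j ∈ Finset.Icc (ja + 1) jb,
          (if dot w (xp i) ≤ kthScore w xn j then (1 : ℝ) else 0)) := by
  set f := fun l => dot w (xn l)
  set p := fun i => dot w (xp i)
  change IsGreatest
    {v | ∃ Z : Finset (Fin n), Z.card = jb ∧
      v = pAUCRisk p (fun j => ((Z.val.map f).sort (· ≤ ·)).getD (jb - j) 0) ja jb}
    (pAUCRisk p (kthScore w xn) ja jb)
  rw [kthScore_eq_kthLargest]
  constructor
  · obtain ⟨t, hts, htcard, hteq⟩ :=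
      (Finset.univ.val.map f).exists_le_card_eq_forall_kthLargest_eq (k := jb) (by simpa using h2)
    obtain ⟨Z, -, rfl⟩ := Finset.exists_subset_map_val_eq_of_le_map hts
    have hZ : Z.card = jb := by simpa using htcard
    refine ⟨Z, hZ, pAUCRisk_congr p fun j hj => ?_⟩
    rw [← hZ, ← Finset.kthLargest_map_val, hteq j (Finset.mem_Icc.1 hj).2]
  · rintro v ⟨Z, rfl, rfl⟩
    refine pAUCRisk_mono p hja.le fun j hj => ?_
    rw [← Finset.kthLargest_map_val]
    obtain ⟨hj₁, hj⟩ := Finset.mem_Icc.1 hj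
    exact Multiset.kthLargest_mono (Multiset.map_le_map (Finset.val_le_iff.2 Z.subset_univ))
      (by omega) (by simpa using hj)

/-- Theorem 6 of the paper: the empirical partial AUC risk in [α,β] equals the maximum
over size-j_β subsets Z of negatives of R̃(w;S₊,Z), where R̃ is computed using the
within-Z ranking of negatives (z_1,…,z_{j_β} sorted by decreasing score within Z).
Since the losses depend only on scores, the j-th ranked negative of Z is represented
by the j-th largest score within Z.  Negative scores are assumed all distinct. -/
theorem stmt16 (d m n ja jb : ℕ) (hja : ja < jb) (h2 : jb ≤ n)
    (xp : Fin m → Fin d → ℝ) (xn : Fin n → Fin d → ℝ) (w : Fin d → ℝ)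
    (hdist : Function.Injective fun j => dot w (xn j)) :
    IsGreatest
      {v : ℝ | ∃ Z : Finset (Fin n), Z.card = jb ∧
        v = (1 / ((m : ℝ) * ((jb : ℝ) - (ja : ℝ)))) *
              ∑ i, ∑ j ∈ Finset.Icc (ja + 1) jb,
                (if dot w (xp i) ≤
                    ((Z.val.map fun l => dot w (xn l)).sort (· ≤ ·)).getD (jb - j) 0
                  then (1 : ℝ) else 0)}
      ((1 / ((m : ℝ) * ((jb : ℝ) - (ja : ℝ)))) *
        ∑ i, ∑ j ∈ Finset.Icc (ja + 1) jb,
          (if dot w (xp i) ≤ kthScore w xn j then (1 : ℝ) else 0)) :=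
  stmt16_general d m n ja jb hja h2 xp xn w
end
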